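/- Let ρ₁₁, ρ₁₂, ρ₂₂ ≥ 0 be real numbers, H₁₁ an N₁×M₁ complex matrix, H₁₂ and H₂₂ respectively N₂×M₁ and N₂×M₂ complex matrices, and Q an M₁×M₂ complex matrix with Q Q† ⪯ I_{M₁}. Then det(I_{N₂} + ρ₂₂ H₂₂ H₂₂† + ρ₁₂ H₁₂ H₁₂† + √(ρ₂₂ρ₁₂) H₂₂ Q† H₁₂† + √(ρ₂₂ρ₁₂) H₁₂ Q H₂₂†) · det(I_{N₁} + ρ₁₁ H₁₁ H₁₁† − [√(ρ₁₁ρ₁₂) H₁₁ H₁₂†, √ρ₁₁ H₁₁ Q] · [[I_{N₂} + ρ₁₂ H₁₂ H₁₂†, √ρ₁₂ H₁₂ Q], [√ρ₁₂ Q† H₁₂†, I_{M₂}]]^{-1} · [√(ρ₁₁ρ₁₂) H₁₂ H₁₁†; √ρ₁₁ Q† H₁₁†]) ≤ 2^{N₂} · det(I_{N₂} + ρ₂₂ H₂₂ H₂₂† + ρ₁₂ H₁₂ H₁₂†) · det(I_{N₁} + ρ₁₁ H₁₁ H₁₁† − ρ₁₁ ρ₁₂ H₁₁ H₁₂† (I_{N₂}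 + ρ₁₂ H₁₂ H₁₂†)^{-1} H₁₂ H₁₁†), where all matrices whose determinants appear are Hermitian positive semidefinite so their determinants are nonnegative reals; the inner 2×2 block matrix and I_{N₂} + ρ₁₂ H₁₂ H₁₂† are positive definite, hence invertible. -/

import Mathlib

open scoped ComplexOrder Matrix

/-- `I_{N₂} + ρ₂₂H₂₂H₂₂ᴴ + ρ₁₂H₁₂H₁₂ᴴ + √(ρ₂₂ρ₁₂)H₂₂QᴴH₁₂ᴴ + √(ρ₂₂ρ₁₂)H₁₂QH₂₂ᴴ`. -/
noncomputable def corrSum {N₂ M₁ M₂ : ℕ} (ρ₂₂ ρ₁₂ : ℝ)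
    (H22 : Matrix (Fin N₂) (Fin M₂) ℂ) (H12 : Matrix (Fin N₂) (Fin M₁) ℂ)
    (Q : Matrix (Fin M₁) (Fin M₂) ℂ) : Matrix (Fin N₂) (Fin N₂) ℂ :=
  (1 : Matrix (Fin N₂) (Fin N₂) ℂ) + (ρ₂₂ : ℂ) • (H22 * H22ᴴ) + (ρ₁₂ : ℂ) • (H12 * H12ᴴ) +
    (Real.sqrt (ρ₂₂ * ρ₁₂) : ℂ) • (H22 * Qᴴ * H12ᴴ) +
    (Real.sqrt (ρ₂₂ * ρ₁₂) : ℂ) • (H12 * Q * H22ᴴ)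

/-- The inner 2×2 block matrix `[[I + ρ₁₂H₁₂H₁₂ᴴ, √ρ₁₂H₁₂Q], [√ρ₁₂QᴴH₁₂ᴴ, I]]`. -/
noncomputable def innerBlock {N₂ M₁ M₂ : ℕ} (ρ₁₂ : ℝ) (H12 : Matrix (Fin N₂) (Fin M₁) ℂ)
    (Q : Matrix (Fin M₁) (Fin M₂) ℂ) :
    Matrix (Fin N₂ ⊕ Fin M₂) (Fin N₂ ⊕ Fin M₂) ℂ :=
  Matrix.fromBlocks ((1 : Matrix (Fin N₂) (Fin N₂) ℂ) + (ρ₁₂ : ℂ) • (H12 * H12ᴴ))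
    ((Real.sqrt ρ₁₂ : ℂ) • (H12 * Q)) ((Real.sqrt ρ₁₂ : ℂ) • (Qᴴ * H12ᴴ))
    (1 : Matrix (Fin M₂) (Fin M₂) ℂ)

/-- `I_{N₁} + ρ₁₁H₁₁H₁₁ᴴ` minus the Schur-complement correction with correlation `Q`. -/
noncomputable def corrSchur {N₁ N₂ M₁ M₂ : ℕ} (ρ₁₁ ρ₁₂ : ℝ)
    (H11 : Matrix (Fin N₁) (Fin M₁) ℂ) (H12 : Matrix (Fin N₂) (Fin M₁) ℂ)
    (Q : Matrix (Fin M₁) (Fin M₂) ℂ) : Matrix (Fin N₁) (Fin N₁) ℂ :=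
  (1 : Matrix (Fin N₁) (Fin N₁) ℂ) + (ρ₁₁ : ℂ) • (H11 * H11ᴴ) -
    Matrix.fromCols ((Real.sqrt (ρ₁₁ * ρ₁₂) : ℂ) • (H11 * H12ᴴ))
        ((Real.sqrt ρ₁₁ : ℂ) • (H11 * Q)) *
      (innerBlock ρ₁₂ H12 Q)⁻¹ *
      Matrix.fromRows ((Real.sqrt (ρ₁₁ * ρ₁₂) : ℂ) • (H12 * H11ᴴ))
        ((Real.sqrt ρ₁₁ : ℂ) • (Qᴴ * H11ᴴ))

/-- `I_{N₂} + ρ₂₂H₂₂H₂₂ᴴ + ρ₁₂H₁₂H₁₂ᴴ`. -/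
noncomputable def uncorrSum {N₂ M₁ M₂ : ℕ} (ρ₂₂ ρ₁₂ : ℝ)
    (H22 : Matrix (Fin N₂) (Fin M₂) ℂ) (H12 : Matrix (Fin N₂) (Fin M₁) ℂ) :
    Matrix (Fin N₂) (Fin N₂) ℂ :=
  (1 : Matrix (Fin N₂) (Fin N₂) ℂ) + (ρ₂₂ : ℂ) • (H22 * H22ᴴ) + (ρ₁₂ : ℂ) • (H12 * H12ᴴ)

/-- `I_{N₁} + ρ₁₁H₁₁H₁₁ᴴ − ρ₁₁ρ₁₂ H₁₁H₁₂ᴴ (I + ρ₁₂H₁₂H₁₂ᴴ)⁻¹ H₁₂H₁₁ᴴ`. -/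
noncomputable def uncorrSchur {N₁ N₂ M₁ : ℕ} (ρ₁₁ ρ₁₂ : ℝ)
    (H11 : Matrix (Fin N₁) (Fin M₁) ℂ) (H12 : Matrix (Fin N₂) (Fin M₁) ℂ) :
    Matrix (Fin N₁) (Fin N₁) ℂ :=
  (1 : Matrix (Fin N₁) (Fin N₁) ℂ) + (ρ₁₁ : ℂ) • (H11 * H11ᴴ) -
    ((ρ₁₁ * ρ₁₂ : ℝ) : ℂ) •
      (H11 * H12ᴴ * ((1 : Matrix (Fin N₂) (Fin N₂) ℂ) + (ρ₁₂ : ℂ) • (H12 * H12ᴴ))⁻¹ *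
        (H12 * H11ᴴ))

/-!
Put `u = √ρ₁₁ H₁₁`, `v = √ρ₁₂ H₁₂`, `w = √ρ₂₂ H₂₂` and `K = [[I, Q], [Q†, I]]`, which is positive
semidefinite because its Schur complement is `I - QQ†`. The correlated sum is `I + [v w] K [v w]†`
and twice the uncorrelated sum minus it is `I + [v -w] K [v -w]†`, so it lies between `0` and twice
the uncorrelated sum. Both Schur terms are Schur complements of `I + uu†` in positive semidefinite
block matrices, the correlated one with respect to the larger block `M = [[I + vv†, vQ], [Q†v†, I]]`;
since `M⁻¹ ⪰ diag((I + vv†)⁻¹, 0)`, the correlated Schur term is the smaller one. Monotonicity of the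
determinant on positive semidefinite matrices gives both factors of the bound.
-/

open Matrix

namespace Matrix

section Blocks

variable {α : Type*} [Add α] {k m n : Type*}

lemma fromRows_add_fromRows (A₁ B₁ : Matrix n k α) (A₂ B₂ : Matrix m k α) :
    fromRows A₁ A₂ + fromRows B₁ B₂ = fromRows (A₁ + B₁) (A₂ + B₂) := by
  ext (i | i) j <;> rfl

lemma fromCols_add_fromCols (A₁ B₁ : Matrix k n α) (A₂ B₂ : Matrix k m α) :
    fromCols A₁ A₂ + fromCols B₁ B₂ = fromCols (A₁ + B₁) (A₂ + B₂) := by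
  ext i (j | j) <;> rfl

end Blocks

variable {𝕜 : Type*} [RCLike 𝕜] {n : Type*} [Fintype n] [DecidableEq n]

open scoped MatrixOrder in
lemma IsHermitian.eigenvalues_le_one {C : Matrix n n 𝕜} (hC : C.IsHermitian)
    (h : (1 - C).PosSemidef) (i : n) : hC.eigenvalues i ≤ 1 := by
  have hle : C ≤ algebraMap ℝ (Matrix n n 𝕜) 1 := by simpa [Matrix.le_iff] using h
  exact (le_algebraMap_iff_spectrum_le hC.isSelfAdjoint).mp hle _
    (hC.eigenvalues_mem_spectrum_real i)

lemma PosSemidef.det_le_one {C : Matrix n n 𝕜} (hC : C.PosSemidef) (h : (1 - C).PosSemidef) :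
    C.det ≤ 1 := by
  rw [hC.isHermitian.det_eq_prod_eigenvalues, ← RCLike.ofReal_prod, ← RCLike.ofReal_one,
    RCLike.ofReal_le_ofReal]
  exact Finset.prod_le_one (fun i _ ↦ hC.eigenvalues_nonneg i)
    fun i _ ↦ hC.isHermitian.eigenvalues_le_one h i

open scoped MatrixOrder in
/-- Conjugating by `B^{-1/2}` reduces the claim to `det C ≤ 1` for `0 ⪯ C ⪯ 1`. -/
lemma PosSemidef.det_le_det {A B : Matrix n n 𝕜} (hA : A.PosSemidef) (hB : B.PosDef)
    (hAB : (B - A).PosSemidef) : A.det ≤ B.det := by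
  set S := CFC.sqrt B
  have hS : S.IsHermitian := (CFC.sqrt_nonneg B).posSemidef.isHermitian
  have hSS : S * S = B := CFC.sqrt_mul_sqrt_self B hB.posSemidef.nonneg
  have hdetS : IsUnit S.det := by
    refine isUnit_of_mul_isUnit_left (y := S.det) ?_
    rw [← det_mul, hSS]
    exact hB.isUnit.map detMonoidHom
  have hT : (S⁻¹)ᴴ = S⁻¹ := by rw [conjTranspose_nonsing_inv, hS.eq]
  set C := S⁻¹ * A * S⁻¹
  have hC : C.PosSemidef := by simpa [hT] using hA.mul_mul_conjTranspose_same S⁻¹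
  have h1C : (1 - C).PosSemidef := by
    have hB1 : S⁻¹ * B * S⁻¹ = 1 := by
      rw [← hSS, ← Matrix.mul_assoc, nonsing_inv_mul _ hdetS, Matrix.one_mul,
        mul_nonsing_inv _ hdetS]
    simpa [hT, Matrix.mul_sub, Matrix.sub_mul, hB1] using hAB.mul_mul_conjTranspose_same S⁻¹
  have hdet : A.det = B.det * C.det := by
    have hSCS : S * C * S = A := by
      rw [← Matrix.mul_assoc, ← Matrix.mul_assoc, mul_nonsing_inv _ hdetS, Matrix.one_mul,
        Matrix.mul_assoc, nonsing_inv_mul _ hdetS, Matrix.mul_one]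
    rw [← hSS, det_mul, ← congrArg det hSCS, det_mul, det_mul]
    ring
  rw [hdet]
  exact mul_le_of_le_one_right hB.posSemidef.det_nonneg (hC.det_le_one h1C)

variable {m : Type*} [Fintype m] [DecidableEq m]

lemma posSemidef_fromBlocks_one_one {Q : Matrix n m 𝕜} (hQ : (1 - Q * Qᴴ).PosSemidef) :
    (fromBlocks 1 Q Qᴴ 1).PosSemidef := by
  have : Invertible (1 : Matrix m m 𝕜) := invertibleOne
  exact (PosDef.fromBlocks₂₂ 1 Q PosDef.one).mpr (by simpa using hQ)

lemma PosDef.fromBlocks_of_schur₂₂ {A : Matrix n n 𝕜} {B : Matrix n m 𝕜} {D : Matrix m m 𝕜}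
    (hD : D.PosDef) (h : (A - B * D⁻¹ * Bᴴ).PosDef) : (fromBlocks A B Bᴴ D).PosDef := by
  have := hD.isUnit.invertible
  refine ((PosDef.fromBlocks₂₂ A B hD).mpr h.posSemidef).posDef_iff_det_ne_zero.mpr ?_
  rw [det_fromBlocks₂₂, invOf_eq_nonsing_inv]
  exact mul_ne_zero hD.det_pos.ne' h.det_pos.ne'

lemma PosDef.schur₁₁_of_fromBlocks {A : Matrix n n 𝕜} {B : Matrix n m 𝕜} {D : Matrix m m 𝕜}
    (hM : (fromBlocks A B Bᴴ D).PosDef) : (D - Bᴴ * A⁻¹ * B).PosDef := by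
  have hA : A.PosDef := hM.submatrix Sum.inl_injective
  have := hA.isUnit.invertible
  refine ((PosDef.fromBlocks₁₁ B D hA).mp hM.posSemidef).posDef_iff_det_ne_zero.mpr ?_
  have hdet := hM.det_pos.ne'
  rw [det_fromBlocks₁₁, invOf_eq_nonsing_inv] at hdet
  exact right_ne_zero_of_mul hdet

/-- The block-inverse formula writes the difference as `P S⁻¹ Pᴴ` with `P = [-A⁻¹B; 1]` and
`S = D - BᴴA⁻¹B`. -/
lemma PosDef.posSemidef_inv_fromBlocks_sub {A : Matrix n n 𝕜} {B : Matrix n m 𝕜}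
    {D : Matrix m m 𝕜} (hM : (fromBlocks A B Bᴴ D).PosDef) :
    ((fromBlocks A B Bᴴ D)⁻¹ - fromBlocks A⁻¹ 0 0 0).PosSemidef := by
  have hA : A.PosDef := hM.submatrix Sum.inl_injective
  have hS := hM.schur₁₁_of_fromBlocks
  have := hA.isUnit.invertible
  have : Invertible (D - Bᴴ * ⅟A * B) := by rw [invOf_eq_nonsing_inv]; exact hS.isUnit.invertible
  have := hM.isUnit.invertible
  set P : Matrix (n ⊕ m) m 𝕜 := fromRows (-(A⁻¹ * B)) 1
  have hinv : (fromBlocks A B Bᴴ D)⁻¹ - fromBlocks A⁻¹ 0 0 0 =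
      P * (D - Bᴴ * A⁻¹ * B)⁻¹ * Pᴴ := by
    rw [sub_eq_iff_eq_add, ← invOf_eq_nonsing_inv, invOf_fromBlocks₁₁_eq]
    simp [P, conjTranspose_fromRows_eq_fromCols_conjTranspose, hA.isHermitian.inv.eq,
      fromBlocks_add, Matrix.mul_assoc, add_comm]
  rw [hinv]
  exact hS.inv.posSemidef.mul_mul_conjTranspose_same P

lemma PosDef.posSemidef_fromCols_mul_inv_mul_sub {l : Type*} [Finite l] {A : Matrix n n 𝕜}
    {B : Matrix n m 𝕜} {D : Matrix m m 𝕜} (hM : (fromBlocks A B Bᴴ D).PosDef)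
    (X₁ : Matrix l n 𝕜) (X₂ : Matrix l m 𝕜) :
    (fromCols X₁ X₂ * (fromBlocks A B Bᴴ D)⁻¹ * (fromCols X₁ X₂)ᴴ -
      X₁ * A⁻¹ * X₁ᴴ).PosSemidef := by
  simpa [Matrix.mul_sub, Matrix.sub_mul, fromCols_mul_fromBlocks, fromCols_mul_fromRows,
    conjTranspose_fromCols_eq_fromRows_conjTranspose] using
    hM.posSemidef_inv_fromBlocks_sub.mul_mul_conjTranspose_same (fromCols X₁ X₂)

end Matrix

section Correlated

variable {𝕜 : Type*} [RCLike 𝕜] {k l m n : Type*} [Fintype k] [DecidableEq k] [Fintype m]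
  [DecidableEq m] [Fintype n] [DecidableEq n] {Q : Matrix k m 𝕜}

lemma posSemidef_one_add_correlated (hQ : (1 - Q * Qᴴ).PosSemidef) (v : Matrix n k 𝕜)
    (w : Matrix n m 𝕜) : (1 + w * wᴴ + v * vᴴ + w * Qᴴ * vᴴ + v * Q * wᴴ).PosSemidef := by
  convert PosSemidef.one.add
    ((posSemidef_fromBlocks_one_one hQ).mul_mul_conjTranspose_same (fromCols v w)) using 1
  simp only [conjTranspose_fromCols_eq_fromRows_conjTranspose, fromCols_mul_fromBlocks,
    fromCols_mul_fromRows, Matrix.mul_one, Matrix.add_mul, Matrix.mul_assoc]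
  abel

lemma det_correlated_le_two_pow_mul (hQ : (1 - Q * Qᴴ).PosSemidef) (v : Matrix n k 𝕜)
    (w : Matrix n m 𝕜) :
    (1 + w * wᴴ + v * vᴴ + w * Qᴴ * vᴴ + v * Q * wᴴ).det ≤
      2 ^ Fintype.card n * (1 + w * wᴴ + v * vᴴ).det := by
  set U : Matrix n n 𝕜 := 1 + w * wᴴ + v * vᴴ
  have hU : U.PosDef := by
    simp only [U, add_assoc]
    exact PosDef.one.add_posSemidef
      ((posSemidef_self_mul_conjTranspose w).add (posSemidef_self_mul_conjTranspose v))
  have h2U : (U + U).det = 2 ^ Fintype.card n * U.det := by rw [← two_smul 𝕜, det_smul]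
  rw [← h2U]
  refine (posSemidef_one_add_correlated hQ v w).det_le_det (hU.add hU) ?_
  convert posSemidef_one_add_correlated hQ v (-w) using 1
  simp only [U, conjTranspose_neg, Matrix.neg_mul, Matrix.mul_neg, neg_neg]
  abel

lemma posDef_fromBlocks_correlated (hQ : (1 - Q * Qᴴ).PosSemidef) (v : Matrix n k 𝕜) :
    (fromBlocks (1 + v * vᴴ) (v * Q) (v * Q)ᴴ 1).PosDef := by
  refine PosDef.fromBlocks_of_schur₂₂ PosDef.one ?_
  convert PosDef.one.add_posSemidef (hQ.mul_mul_conjTranspose_same v) using 1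
  simp only [inv_one, Matrix.mul_one, conjTranspose_mul, Matrix.mul_sub, Matrix.sub_mul,
    Matrix.mul_assoc]
  abel

/-- The big matrix is `diag(1, 1, 0) + Y K Yᴴ` with `K = [[1, Q], [Qᴴ, 1]]` and
`Y = [[u, 0], [v, 0], [0, 1]]`. -/
lemma posSemidef_fromBlocks_fromBlocks_correlated [Fintype l] [DecidableEq l]
    (hQ : (1 - Q * Qᴴ).PosSemidef) (u : Matrix l k 𝕜) (v : Matrix n k 𝕜) :
    (fromBlocks (1 + u * uᴴ) (fromCols (u * vᴴ) (u * Q)) (fromCols (u * vᴴ) (u * Q))ᴴ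
      (fromBlocks (1 + v * vᴴ) (v * Q) (v * Q)ᴴ 1)).PosSemidef := by
  have hYKY := (posSemidef_fromBlocks_one_one hQ).mul_mul_conjTranspose_same
    (fromBlocks u 0 (fromRows v 0) (fromRows 0 1) : Matrix (l ⊕ n ⊕ m) (k ⊕ m) 𝕜)
  have hD : (fromBlocks 1 0 0 (fromBlocks 1 0 0 0) : Matrix (l ⊕ n ⊕ m) _ 𝕜).PosSemidef := by
    rw [← diagonal_zero, ← diagonal_one, ← diagonal_one, fromBlocks_diagonal, fromBlocks_diagonal,
      posSemidef_diagonal_iff]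
    rintro (i | i | i) <;> simp
  convert hD.add hYKY using 1
  simp [fromBlocks_multiply, fromBlocks_add, fromBlocks_conjTranspose,
    conjTranspose_fromCols_eq_fromRows_conjTranspose,
    conjTranspose_fromRows_eq_fromCols_conjTranspose, fromRows_mul, fromRows_add_fromRows,
    fromCols_add_fromCols, Matrix.mul_assoc]

lemma posSemidef_correlated_schur [Fintype l] [DecidableEq l] (hQ : (1 - Q * Qᴴ).PosSemidef)
    (u : Matrix l k 𝕜) (v : Matrix n k 𝕜) :
    (1 + u * uᴴ - fromCols (u * vᴴ) (u * Q) * (fromBlocks (1 + v * vᴴ) (v * Q) (v * Q)ᴴ 1)⁻¹ *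
      (fromCols (u * vᴴ) (u * Q))ᴴ).PosSemidef := by
  have hM := posDef_fromBlocks_correlated hQ v
  have := hM.isUnit.invertible
  exact (PosDef.fromBlocks₂₂ _ _ hM).mp (posSemidef_fromBlocks_fromBlocks_correlated hQ u v)

omit [DecidableEq k] [Fintype m] [DecidableEq m] in
lemma posDef_uncorrelated_schur [Fintype l] [DecidableEq l] (u : Matrix l k 𝕜)
    (v : Matrix n k 𝕜) : (1 + u * uᴴ - (v * uᴴ)ᴴ * (1 + v * vᴴ)⁻¹ * (v * uᴴ)).PosDef := by
  refine PosDef.schur₁₁_of_fromBlocks ?_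
  convert PosDef.one.add_posSemidef (posSemidef_self_mul_conjTranspose (fromRows v u)) using 1
  rw [conjTranspose_fromRows_eq_fromCols_conjTranspose, fromRows_mul_fromCols, ← fromBlocks_one,
    fromBlocks_add, conjTranspose_mul, conjTranspose_conjTranspose, zero_add, zero_add]

lemma det_correlated_schur_le [Fintype l] [DecidableEq l] (hQ : (1 - Q * Qᴴ).PosSemidef)
    (u : Matrix l k 𝕜) (v : Matrix n k 𝕜) :
    (1 + u * uᴴ - fromCols (u * vᴴ) (u * Q) * (fromBlocks (1 + v * vᴴ) (v * Q) (v * Q)ᴴ 1)⁻¹ *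
      (fromCols (u * vᴴ) (u * Q))ᴴ).det ≤
      (1 + u * uᴴ - (v * uᴴ)ᴴ * (1 + v * vᴴ)⁻¹ * (v * uᴴ)).det := by
  refine (posSemidef_correlated_schur hQ u v).det_le_det (posDef_uncorrelated_schur u v) ?_
  convert (posDef_fromBlocks_correlated hQ v).posSemidef_fromCols_mul_inv_mul_sub
    (u * vᴴ) (u * Q) using 1
  simp only [conjTranspose_mul, conjTranspose_conjTranspose]
  abel

end Correlated

section Channel

variable {N₁ N₂ M₁ M₂ : ℕ} {ρ₁₁ ρ₁₂ ρ₂₂ : ℝ} (H11 : Matrix (Fin N₁) (Fin M₁) ℂ)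
  (H12 : Matrix (Fin N₂) (Fin M₁) ℂ) (H22 : Matrix (Fin N₂) (Fin M₂) ℂ)
  (Q : Matrix (Fin M₁) (Fin M₂) ℂ)

lemma corrSum_eq (hρ₂₂ : 0 ≤ ρ₂₂) (hρ₁₂ : 0 ≤ ρ₁₂) :
    corrSum ρ₂₂ ρ₁₂ H22 H12 Q =
      1 + ((√ρ₂₂ : ℂ) • H22) * ((√ρ₂₂ : ℂ) • H22)ᴴ + ((√ρ₁₂ : ℂ) • H12) * ((√ρ₁₂ : ℂ) • H12)ᴴ +
        ((√ρ₂₂ : ℂ) • H22) * Qᴴ * ((√ρ₁₂ : ℂ) • H12)ᴴ +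
        ((√ρ₁₂ : ℂ) • H12) * Q * ((√ρ₂₂ : ℂ) • H22)ᴴ := by
  simp only [corrSum, conjTranspose_smul, Complex.star_def, Complex.conj_ofReal, Matrix.smul_mul,
    Matrix.mul_smul, smul_smul, ← Complex.ofReal_mul, Real.mul_self_sqrt hρ₂₂,
    Real.mul_self_sqrt hρ₁₂, Real.sqrt_mul hρ₂₂, mul_comm (√ρ₁₂)]

lemma uncorrSum_eq (hρ₂₂ : 0 ≤ ρ₂₂) (hρ₁₂ : 0 ≤ ρ₁₂) :
    uncorrSum ρ₂₂ ρ₁₂ H22 H12 =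
      1 + ((√ρ₂₂ : ℂ) • H22) * ((√ρ₂₂ : ℂ) • H22)ᴴ +
        ((√ρ₁₂ : ℂ) • H12) * ((√ρ₁₂ : ℂ) • H12)ᴴ := by
  simp only [uncorrSum, conjTranspose_smul, Complex.star_def, Complex.conj_ofReal,
    Matrix.smul_mul, Matrix.mul_smul, smul_smul, ← Complex.ofReal_mul, Real.mul_self_sqrt hρ₂₂,
    Real.mul_self_sqrt hρ₁₂]

lemma innerBlock_eq (hρ₁₂ : 0 ≤ ρ₁₂) :
    innerBlock ρ₁₂ H12 Q =
      fromBlocks (1 + ((√ρ₁₂ : ℂ) • H12) * ((√ρ₁₂ : ℂ) • H12)ᴴ) (((√ρ₁₂ : ℂ) • H12) * Q)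
        (((√ρ₁₂ : ℂ) • H12) * Q)ᴴ 1 := by
  simp only [innerBlock, conjTranspose_mul, conjTranspose_smul, Complex.star_def,
    Complex.conj_ofReal, Matrix.smul_mul, Matrix.mul_smul, smul_smul, ← Complex.ofReal_mul,
    Real.mul_self_sqrt hρ₁₂]

lemma corrSchur_eq (hρ₁₁ : 0 ≤ ρ₁₁) (hρ₁₂ : 0 ≤ ρ₁₂) :
    corrSchur ρ₁₁ ρ₁₂ H11 H12 Q =
      1 + ((√ρ₁₁ : ℂ) • H11) * ((√ρ₁₁ : ℂ) • H11)ᴴ -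
        fromCols (((√ρ₁₁ : ℂ) • H11) * ((√ρ₁₂ : ℂ) • H12)ᴴ) (((√ρ₁₁ : ℂ) • H11) * Q) *
          (fromBlocks (1 + ((√ρ₁₂ : ℂ) • H12) * ((√ρ₁₂ : ℂ) • H12)ᴴ) (((√ρ₁₂ : ℂ) • H12) * Q)
            (((√ρ₁₂ : ℂ) • H12) * Q)ᴴ 1)⁻¹ *
          (fromCols (((√ρ₁₁ : ℂ) • H11) * ((√ρ₁₂ : ℂ) • H12)ᴴ) (((√ρ₁₁ : ℂ) • H11) * Q))ᴴ := by
  rw [← innerBlock_eq H12 Q hρ₁₂]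
  simp only [corrSchur, conjTranspose_fromCols_eq_fromRows_conjTranspose, conjTranspose_mul,
    conjTranspose_conjTranspose, conjTranspose_smul, Complex.star_def, Complex.conj_ofReal,
    Matrix.smul_mul, Matrix.mul_smul, smul_smul, ← Complex.ofReal_mul, Real.mul_self_sqrt hρ₁₁,
    Real.sqrt_mul hρ₁₁, mul_comm (√ρ₁₂)]

lemma uncorrSchur_eq (hρ₁₁ : 0 ≤ ρ₁₁) (hρ₁₂ : 0 ≤ ρ₁₂) :
    uncorrSchur ρ₁₁ ρ₁₂ H11 H12 =
      1 + ((√ρ₁₁ : ℂ) • H11) * ((√ρ₁₁ : ℂ) • H11)ᴴ -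
        (((√ρ₁₂ : ℂ) • H12) * ((√ρ₁₁ : ℂ) • H11)ᴴ)ᴴ *
          (1 + ((√ρ₁₂ : ℂ) • H12) * ((√ρ₁₂ : ℂ) • H12)ᴴ)⁻¹ *
          (((√ρ₁₂ : ℂ) • H12) * ((√ρ₁₁ : ℂ) • H11)ᴴ) := by
  have hs : √ρ₁₁ * √ρ₁₂ * (√ρ₁₁ * √ρ₁₂) = ρ₁₁ * ρ₁₂ := by
    rw [mul_mul_mul_comm, Real.mul_self_sqrt hρ₁₁, Real.mul_self_sqrt hρ₁₂]
  simp only [uncorrSchur, conjTranspose_mul, conjTranspose_conjTranspose, conjTranspose_smul,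
    Complex.star_def, Complex.conj_ofReal, Matrix.smul_mul, Matrix.mul_smul, smul_smul,
    ← Complex.ofReal_mul, Real.mul_self_sqrt hρ₁₁, Real.mul_self_sqrt hρ₁₂, Matrix.mul_assoc, hs]

end Channel

/-- Fifth-bound estimate: the product of the two correlated determinants is at most
`2^{N₂}` times the product of the two uncorrelated ones; all matrices whose determinants
appear are Hermitian PSD (so the determinants are nonnegative reals), and the inner block
matrix and `I + ρ₁₂H₁₂H₁₂ᴴ` are positive definite. -/
theorem det_product_correlated_le_pow {N₁ N₂ M₁ M₂ : ℕ} (ρ₁₁ ρ₁₂ ρ₂₂ : ℝ)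
    (hρ₁₁ : 0 ≤ ρ₁₁) (hρ₁₂ : 0 ≤ ρ₁₂) (hρ₂₂ : 0 ≤ ρ₂₂)
    (H11 : Matrix (Fin N₁) (Fin M₁) ℂ) (H12 : Matrix (Fin N₂) (Fin M₁) ℂ)
    (H22 : Matrix (Fin N₂) (Fin M₂) ℂ)
    (Q : Matrix (Fin M₁) (Fin M₂) ℂ)
    (hQ : ((1 : Matrix (Fin M₁) (Fin M₁) ℂ) - Q * Qᴴ).PosSemidef) :
    (corrSum ρ₂₂ ρ₁₂ H22 H12 Q).PosSemidef ∧ (corrSchur ρ₁₁ ρ₁₂ H11 H12 Q).PosSemidef ∧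
    (uncorrSum (M₁ := M₁) ρ₂₂ ρ₁₂ H22 H12).PosSemidef ∧
    (uncorrSchur ρ₁₁ ρ₁₂ H11 H12).PosSemidef ∧
    (innerBlock ρ₁₂ H12 Q).PosDef ∧
    ((1 : Matrix (Fin N₂) (Fin N₂) ℂ) + (ρ₁₂ : ℂ) • (H12 * H12ᴴ)).PosDef ∧
    ∃ a₁ a₂ b₁ b₂ : ℝ, 0 ≤ a₁ ∧ 0 ≤ a₂ ∧ 0 ≤ b₁ ∧ 0 ≤ b₂ ∧
      (corrSum ρ₂₂ ρ₁₂ H22 H12 Q).det = (a₁ : ℂ) ∧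
      (corrSchur ρ₁₁ ρ₁₂ H11 H12 Q).det = (a₂ : ℂ) ∧
      (uncorrSum (M₁ := M₁) ρ₂₂ ρ₁₂ H22 H12).det = (b₁ : ℂ) ∧
      (uncorrSchur ρ₁₁ ρ₁₂ H11 H12).det = (b₂ : ℂ) ∧
      a₁ * a₂ ≤ 2 ^ N₂ * (b₁ * b₂) := by
  have hIB : (innerBlock ρ₁₂ H12 Q).PosDef := by
    rw [innerBlock_eq H12 Q hρ₁₂]
    exact posDef_fromBlocks_correlated hQ _
  rw [corrSum_eq H12 H22 Q hρ₂₂ hρ₁₂, corrSchur_eq H11 H12 Q hρ₁₁ hρ₁₂,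
    uncorrSum_eq H12 H22 hρ₂₂ hρ₁₂, uncorrSchur_eq H11 H12 hρ₁₁ hρ₁₂]
  set u := (√ρ₁₁ : ℂ) • H11
  set v := (√ρ₁₂ : ℂ) • H12
  set w := (√ρ₂₂ : ℂ) • H22
  have hSum := posSemidef_one_add_correlated hQ v w
  have hSchur := posSemidef_correlated_schur hQ u v
  have hUSum : (1 + w * wᴴ + v * vᴴ).PosSemidef :=
    (PosSemidef.one.add (posSemidef_self_mul_conjTranspose w)).add
      (posSemidef_self_mul_conjTranspose v)
  have hUSchur := posDef_uncorrelated_schur u v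
  obtain ⟨a₁, ha₁, ha₁'⟩ := RCLike.nonneg_iff_exists_ofReal.mp hSum.det_nonneg
  obtain ⟨a₂, ha₂, ha₂'⟩ := RCLike.nonneg_iff_exists_ofReal.mp hSchur.det_nonneg
  obtain ⟨b₁, hb₁, hb₁'⟩ := RCLike.nonneg_iff_exists_ofReal.mp hUSum.det_nonneg
  obtain ⟨b₂, hb₂, hb₂'⟩ := RCLike.nonneg_iff_exists_ofReal.mp hUSchur.posSemidef.det_nonneg
  have h₁ := det_correlated_le_two_pow_mul hQ v w
  have h₂ := det_correlated_schur_le hQ u v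
  rw [← ha₁', ← hb₁', Fintype.card_fin] at h₁
  rw [← ha₂', ← hb₂'] at h₂
  refine ⟨hSum, hSchur, hUSum, hUSchur.posSemidef, hIB, hIB.submatrix Sum.inl_injective,
    a₁, a₂, b₁, b₂, ha₁, ha₂, hb₁, hb₂, ha₁'.symm, ha₂'.symm, hb₁'.symm, hb₂'.symm, ?_⟩
  have h₁' : a₁ ≤ 2 ^ N₂ * b₁ := Complex.real_le_real.mp (by push_cast; exact h₁)
  have h₂' : a₂ ≤ b₂ := Complex.real_le_real.mp h₂
  calc a₁ * a₂ ≤ (2 ^ N₂ * b₁) * b₂ := mul_le_mul h₁' h₂' ha₂ (by positivity)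
    _ = 2 ^ N₂ * (b₁ * b₂) := by ring
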